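/- For 0 < p < ∞, a positive Borel measure μ on ℂ satisfies ∫_ℂ |f(z)|^p e^{-(pα/2)|z|²} dμ(z) ≤ C ‖f‖_{∞,α}^p for all f ∈ F_α^∞ (with C independent of f) if and only if μ(ℂ) < ∞. -/

import Mathlib

/-!
The weight `|f z| e^{-α|z|²/2}` is invariant under the Weyl translations
`f ↦ e^{α z w̄ - α|w|²/2} f (z - w)` and transforms by scaling under dilations. The function
`e^{π u²/2} θ(u, i)` is fixed by the Weyl translations by `-1` and `-i` (for `α = π`), so its weight
`G` is continuous, doubly periodic, hence bounded, and `G 0 = |θ(0, i)| > 0`. By compactness of a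
fundamental domain, finitely many translates `G (· - v)` already satisfy `max_v G (u - v) ≥ G 0 / 2`
everywhere; the corresponding rescaled translates are elements of `F_α^∞`, so the Carleson inequality
bounds `∫ (G 0 / 2)^p dμ` by a finite sum of finite integrals. Conversely, the integrand is bounded
pointwise by `‖f‖_{∞,α}^p`, so `C = μ(ℂ)` works.
-/

open MeasureTheory Complex Filter Topology ENNReal NNReal

/-- The `F_α^∞` norm as an extended real. -/
noncomputable def fockNormInf (α : ℝ) (f : ℂ → ℂ) : ℝ≥0∞ :=
  ⨆ z : ℂ, ENNReal.ofReal (‖f z‖ * Real.exp (-(α / 2) * ‖z‖ ^ 2))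

theorem MeasureTheory.measure_univ_lt_top_of_forall_exists_le {X ι : Type*} [MeasurableSpace X]
    {μ : Measure X} {s : Finset ι} {f : ι → X → ℝ≥0∞} {c : ℝ≥0∞} (hc : c ≠ 0)
    (hmeas : ∀ i ∈ s, AEMeasurable (f i) μ) (hint : ∀ i ∈ s, ∫⁻ x, f i x ∂μ < ∞)
    (hcover : ∀ x, ∃ i ∈ s, c ≤ f i x) : μ Set.univ < ∞ := by
  have hle : c * μ Set.univ ≤ ∑ i ∈ s, ∫⁻ x, f i x ∂μ := by
    rw [← lintegral_const, ← lintegral_finsetSum' s hmeas]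
    refine lintegral_mono fun x => ?_
    obtain ⟨i, hi, hcx⟩ := hcover x
    exact hcx.trans (Finset.single_le_sum (f := fun j => f j x) (fun j _ => zero_le) hi)
  exact lt_top_of_mul_ne_top_right ((hle.trans_lt (ENNReal.sum_lt_top.2 hint)).ne) hc

section IntegerLattice

variable {β : Type*} {g : ℂ → β}

theorem Function.Periodic.apply_sub_int_lattice (h1 : Function.Periodic g 1)
    (hI : Function.Periodic g I) (u : ℂ) (m n : ℤ) : g (u - (m + n * I)) = g u := by
  have hm : Function.Periodic g m := by simpa using h1.int_mul m
  rw [← sub_sub, (hI.int_mul n).sub_eq, hm.sub_eq]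

theorem exists_sub_int_lattice_mem_closedBall (u : ℂ) :
    ∃ m n : ℤ, u - (m + n * I) ∈ Metric.closedBall (0 : ℂ) 2 := by
  refine ⟨⌊u.re⌋, ⌊u.im⌋, ?_⟩
  have hre : (u - (⌊u.re⌋ + ⌊u.im⌋ * I)).re = Int.fract u.re := by simp [← Int.self_sub_floor]
  have him : (u - (⌊u.re⌋ + ⌊u.im⌋ * I)).im = Int.fract u.im := by simp [← Int.self_sub_floor]
  rw [mem_closedBall_zero_iff]
  refine (norm_le_abs_re_add_abs_im _).trans ?_
  rw [hre, him, abs_of_nonneg (Int.fract_nonneg _), abs_of_nonneg (Int.fract_nonneg _)]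
  linarith [Int.fract_lt_one u.re, Int.fract_lt_one u.im]

variable [TopologicalSpace β] [LinearOrder β]

theorem Function.Periodic.bddAbove_range_of_int_lattice [ClosedIciTopology β] [Nonempty β]
    (h1 : Function.Periodic g 1) (hI : Function.Periodic g I) (hg : Continuous g) :
    BddAbove (Set.range g) := by
  obtain ⟨M, hM⟩ := (isCompact_closedBall (0 : ℂ) 2).bddAbove_image hg.continuousOn
  refine ⟨M, ?_⟩
  rintro _ ⟨u, rfl⟩
  obtain ⟨m, n, hmn⟩ := exists_sub_int_lattice_mem_closedBall u
  rw [← h1.apply_sub_int_lattice hI u m n]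
  exact hM ⟨_, hmn, rfl⟩

theorem Function.Periodic.exists_finset_forall_exists_lt_apply_sub [OrderClosedTopology β]
    (h1 : Function.Periodic g 1) (hI : Function.Periodic g I) (hg : Continuous g) {c : β}
    (hc : c < g 0) :
    ∃ T : Finset ℂ, ∀ u, ∃ v ∈ T, c < g (u - v) := by
  obtain ⟨T, hT⟩ := (isCompact_closedBall (0 : ℂ) 2).elim_finite_subcover
    (fun v => {u | c < g (u - v)})
    (fun v => isOpen_lt continuous_const (hg.comp (continuous_id.sub continuous_const)))
    (fun u _ => Set.mem_iUnion.2 ⟨u, by simpa using hc⟩)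
  refine ⟨T, fun u => ?_⟩
  obtain ⟨m, n, hmn⟩ := exists_sub_int_lattice_mem_closedBall u
  obtain ⟨v, hv, huv⟩ : ∃ v ∈ T, c < g (u - (m + n * I) - v) := by simpa using hT hmn
  refine ⟨v, hv, ?_⟩
  rwa [sub_right_comm, h1.apply_sub_int_lattice hI] at huv

end IntegerLattice

open ComplexConjugate

noncomputable def fockWeight (α : ℝ) (f : ℂ → ℂ) (z : ℂ) : ℝ :=
  ‖f z‖ * Real.exp (-(α / 2) * ‖z‖ ^ 2)

section FockWeight

variable {α : ℝ} {f : ℂ → ℂ}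

theorem fockWeight_nonneg (z : ℂ) : 0 ≤ fockWeight α f z := by
  unfold fockWeight; positivity

theorem continuous_fockWeight (hf : Continuous f) : Continuous (fockWeight α f) := by
  unfold fockWeight; fun_prop

theorem fockWeight_rpow (p : ℝ) (z : ℂ) :
    fockWeight α f z ^ p = ‖f z‖ ^ p * Real.exp (-(p * α / 2) * ‖z‖ ^ 2) := by
  rw [fockWeight, Real.mul_rpow (norm_nonneg _) (Real.exp_pos _).le, ← Real.exp_mul]
  ring_nf

theorem ofReal_fockWeight_le_fockNormInf (z : ℂ) :
    ENNReal.ofReal (fockWeight α f z) ≤ fockNormInf α f :=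
  le_iSup (fun z => ENNReal.ofReal (fockWeight α f z)) z

theorem fockNormInf_le_ofReal {M : ℝ} (hM : ∀ z, fockWeight α f z ≤ M) :
    fockNormInf α f ≤ ENNReal.ofReal M :=
  iSup_le fun z => ENNReal.ofReal_le_ofReal (hM z)

theorem fockWeight_comp_ofReal_mul (s : ℝ) (z : ℂ) :
    fockWeight (s ^ 2 * α) (fun z => f (s * z)) z = fockWeight α f (s * z) := by
  simp only [fockWeight, norm_mul, norm_real, Real.norm_eq_abs, mul_pow, sq_abs]
  ring_nf

end FockWeight

noncomputable def fockTranslate (α : ℝ) (w : ℂ) (f : ℂ → ℂ) (z : ℂ) : ℂ :=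
  cexp (α * z * conj w - (α * ‖w‖ ^ 2 / 2 : ℝ)) * f (z - w)

section FockTranslate

variable {α : ℝ} {w : ℂ} {f : ℂ → ℂ}

theorem Differentiable.fockTranslate (hf : Differentiable ℂ f) :
    Differentiable ℂ (fockTranslate α w f) := by
  unfold _root_.fockTranslate; fun_prop

theorem fockWeight_fockTranslate (z : ℂ) :
    fockWeight α (fockTranslate α w f) z = fockWeight α f (z - w) := by
  have hexp : Real.exp (α * (z * conj w).re - α * ‖w‖ ^ 2 / 2) * Real.exp (-(α / 2) * ‖z‖ ^ 2)
      = Real.exp (-(α / 2) * ‖z - w‖ ^ 2) := by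
    rw [← Real.exp_add]
    congr 1
    simp only [Complex.sq_norm, normSq_apply, mul_re, sub_re, sub_im, conj_re, conj_im]
    ring
  rw [fockWeight, fockWeight, fockTranslate, norm_mul, norm_exp, ← hexp]
  rw [sub_re, mul_assoc (α : ℂ), re_ofReal_mul, ofReal_re]
  ring

theorem periodic_fockWeight_of_fockTranslate_neg_eq (h : fockTranslate α (-w) f = f) :
    Function.Periodic (fockWeight α f) w := fun z => by
  conv_rhs => rw [← h]
  rw [fockWeight_fockTranslate, sub_neg_eq_add]

end FockTranslate

section Theta

open Real

noncomputable def fockTheta (u : ℂ) : ℂ :=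
  cexp (π * u ^ 2 / 2) * jacobiTheta₂ u I

theorem differentiable_fockTheta : Differentiable ℂ fockTheta := fun u =>
  ((differentiableAt_id.pow 2 |>.const_mul _ |>.div_const _).cexp).mul
    (differentiableAt_jacobiTheta₂_fst u (by simp))

theorem fockTranslate_neg_one_fockTheta : fockTranslate π (-1) fockTheta = fockTheta := by
  funext u
  rw [fockTranslate, fockTheta, fockTheta, sub_neg_eq_add, jacobiTheta₂_add_left, ← mul_assoc,
    ← Complex.exp_add]
  congr 2
  push_cast [map_neg, map_one, norm_neg, norm_one]
  ring

theorem fockTranslate_neg_I_fockTheta : fockTranslate π (-I) fockTheta = fockTheta := by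
  funext u
  rw [fockTranslate, fockTheta, fockTheta, sub_neg_eq_add, jacobiTheta₂_add_left', ← mul_assoc,
    ← Complex.exp_add, ← mul_assoc, ← Complex.exp_add]
  congr 2
  push_cast [map_neg, conj_I, norm_neg, norm_I]
  linear_combination (-π / 2 : ℂ) * I_sq

theorem jacobiTheta_I_ne_zero : jacobiTheta I ≠ 0 := by
  have hq : Real.exp (-π) < 1 / 3 := by
    rw [Real.exp_neg, inv_eq_one_div]
    gcongr
    linarith [Real.add_one_le_exp π, Real.pi_gt_three]
  have hbound := norm_jacobiTheta_sub_one_le (τ := I) (by simp)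
  simp only [I_im, mul_one] at hbound
  have hsub : ‖jacobiTheta I - 1‖ < 1 := by
    refine hbound.trans_lt ?_
    rw [div_mul_eq_mul_div, div_lt_one (by linarith)]
    linarith
  intro h
  simp [h] at hsub

theorem fockWeight_fockTheta_zero_pos : 0 < fockWeight π fockTheta 0 := by
  simpa [fockWeight, fockTheta, ← jacobiTheta_eq_jacobiTheta₂] using jacobiTheta_I_ne_zero

end Theta

def IsInftyFockCarleson (α p : ℝ) (μ : Measure ℂ) : Prop :=
  ∃ C : ℝ≥0∞, C < ⊤ ∧ ∀ f : ℂ → ℂ, Differentiable ℂ f → fockNormInf α f < ⊤ →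
    (∫⁻ z : ℂ, ENNReal.ofReal (‖f z‖ ^ p * Real.exp (-(p * α / 2) * ‖z‖ ^ 2)) ∂μ)
      ≤ C * fockNormInf α f ^ p

variable {α p : ℝ} {μ : Measure ℂ}

theorem isInftyFockCarleson_of_measure_univ_lt_top (hp : 0 ≤ p) (hμ : μ Set.univ < ⊤) :
    IsInftyFockCarleson α p μ := by
  refine ⟨μ Set.univ, hμ, fun f _ _ => ?_⟩
  have hpt : ∀ z, ENNReal.ofReal (‖f z‖ ^ p * Real.exp (-(p * α / 2) * ‖z‖ ^ 2))
      ≤ fockNormInf α f ^ p := fun z => by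
    rw [← fockWeight_rpow, ← ENNReal.ofReal_rpow_of_nonneg (fockWeight_nonneg z) hp]
    exact ENNReal.rpow_le_rpow (ofReal_fockWeight_le_fockNormInf z) hp
  calc _ ≤ ∫⁻ _, fockNormInf α f ^ p ∂μ := lintegral_mono hpt
    _ = μ Set.univ * fockNormInf α f ^ p := by rw [lintegral_const, mul_comm]

theorem IsInftyFockCarleson.lintegral_lt_top (h : IsInftyFockCarleson α p μ) (hp : 0 ≤ p)
    {f : ℂ → ℂ} (hf : Differentiable ℂ f) {M : ℝ} (hM : ∀ z, fockWeight α f z ≤ M) :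
    ∫⁻ z, ENNReal.ofReal (fockWeight α f z ^ p) ∂μ < ⊤ := by
  obtain ⟨C, hC, hCf⟩ := h
  have hnorm : fockNormInf α f ≤ ENNReal.ofReal M := fockNormInf_le_ofReal hM
  simp_rw [fockWeight_rpow]
  calc _ ≤ C * fockNormInf α f ^ p := hCf f hf (hnorm.trans_lt ENNReal.ofReal_lt_top)
    _ ≤ C * ENNReal.ofReal M ^ p := by gcongr
    _ < ⊤ := ENNReal.mul_lt_top hC (ENNReal.rpow_lt_top_of_nonneg hp ENNReal.ofReal_ne_top)

theorem IsInftyFockCarleson.measure_univ_lt_top (h : IsInftyFockCarleson α p μ) (hα : 0 < α)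
    (hp : 0 ≤ p) : μ Set.univ < ⊤ := by
  set G := fockWeight Real.pi fockTheta
  have hGcont : Continuous G := continuous_fockWeight differentiable_fockTheta.continuous
  have hG1 : Function.Periodic G 1 :=
    periodic_fockWeight_of_fockTranslate_neg_eq fockTranslate_neg_one_fockTheta
  have hGI : Function.Periodic G I :=
    periodic_fockWeight_of_fockTranslate_neg_eq fockTranslate_neg_I_fockTheta
  have hG0 : 0 < G 0 := fockWeight_fockTheta_zero_pos
  obtain ⟨M, hM⟩ := hG1.bddAbove_range_of_int_lattice hGI hGcont
  obtain ⟨T, hT⟩ := hG1.exists_finset_forall_exists_lt_apply_sub hGI hGcont (half_lt_self hG0)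
  set s := Real.sqrt (α / Real.pi)
  have hs : s ≠ 0 := (Real.sqrt_pos.2 (by positivity)).ne'
  have hαs : s ^ 2 * Real.pi = α := by
    rw [Real.sq_sqrt (by positivity), div_mul_cancel₀ _ Real.pi_ne_zero]
  set testFun : ℂ → ℂ → ℂ := fun v => fockTranslate α (v / s) (fun z => fockTheta (s * z))
  have hweight : ∀ v z, fockWeight α (testFun v) z = G (s * z - v) := fun v z => by
    rw [fockWeight_fockTranslate, ← hαs, fockWeight_comp_ofReal_mul, mul_sub,
      mul_div_cancel₀ _ (ofReal_ne_zero.2 hs)]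
  have hdiff : ∀ v, Differentiable ℂ (testFun v) := fun v =>
    (differentiable_fockTheta.comp (differentiable_id.const_mul _)).fockTranslate
  refine measure_univ_lt_top_of_forall_exists_le (s := T)
    (f := fun v z => ENNReal.ofReal (fockWeight α (testFun v) z ^ p))
    (c := ENNReal.ofReal ((G 0 / 2) ^ p)) ?_ (fun v _ => ?_) (fun v _ => ?_) (fun z => ?_)
  · exact (ENNReal.ofReal_pos.2 (by positivity)).ne'
  · exact ((continuous_fockWeight (hdiff v).continuous).rpow_const fun _ => Or.inr hp)
      |>.measurable.ennreal_ofReal.aemeasurable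
  · refine h.lintegral_lt_top hp (hdiff v) (M := M) fun z => ?_
    rw [hweight]
    exact hM ⟨_, rfl⟩
  · obtain ⟨v, hv, hlt⟩ := hT (s * z)
    refine ⟨v, hv, ENNReal.ofReal_le_ofReal ?_⟩
    rw [hweight]
    exact Real.rpow_le_rpow (by positivity) hlt.le hp

/-- a positive Borel measure `μ` on `ℂ` is an `(∞,p)` Fock–Carleson measure,
i.e. `∫ |f|^p e^{-(pα/2)|z|²} dμ ≤ C ‖f‖_{∞,α}^p` for all `f ∈ F_α^∞`, iff `μ(ℂ) < ∞`. -/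
theorem infty_p_fock_carleson_iff_finite (α p : ℝ) (hα : 0 < α) (hp : 0 < p)
    (μ : Measure ℂ) :
    (∃ C : ℝ≥0∞, C < ⊤ ∧ ∀ f : ℂ → ℂ, Differentiable ℂ f → fockNormInf α f < ⊤ →
        (∫⁻ z : ℂ, ENNReal.ofReal
            (‖f z‖ ^ p * Real.exp (-(p * α / 2) * ‖z‖ ^ 2)) ∂μ)
          ≤ C * fockNormInf α f ^ p)
      ↔ μ Set.univ < ⊤ :=
  ⟨fun h => IsInftyFockCarleson.measure_univ_lt_top h hα hp.le,
    isInftyFockCarleson_of_measure_univ_lt_top hp.le⟩
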